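/- arXiv:2103.03622 — 4 statements merged into one kernel-verified Lean document; each statement's English description precedes it below -/
import Mathlib

section
/- Let f : (Fin n → Bool) → Bool be monotone (if x ≤ y pointwise then f(x) → f(y) for the order false < true), with f(all-true) = true and f(all-false) = false. If E is an explanation (an inclusion-minimal subset with f(indicator E) = true), then every pixel p ∈ E is a cause of the classification of the all-true image, with witness S = (Fin n) \ E, and hence r(p) ≥ 1/(n − |E| + 1). -/
/-!
Masking only pixels outside the explanation `E` leaves at least the pixels of `E` on, so by
monotonicity the classification stays true; masking additionally `p ∈ E` leaves exactly
`E \ {p}`, a proper subset of the minimal `E`, on, so it flips to false. Hence `univ \ E` is a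
witness for `p`, and its size `n - |E|` bounds the minimal witness size.
-/

def mask {n : ℕ} (S : Finset (Fin n)) : Fin n → Bool := fun i => if i ∈ S then false else true

def allTrue {n : ℕ} : Fin n → Bool := fun _ => true

def IsWitness {n : ℕ} (f : (Fin n → Bool) → Bool) (i : Fin n) (S : Finset (Fin n)) : Prop :=
  i ∉ S ∧ (∀ S' ⊆ S, f (mask S') = f allTrue) ∧ f (mask (insert i S)) ≠ f allTrue

def IsCause {n : ℕ} (f : (Fin n → Bool) → Bool) (i : Fin n) : Prop := ∃ S, IsWitness f i S

noncomputable def minWitness {n : ℕ} (f : (Fin n → Bool) → Bool) (i : Fin n) : ℕ :=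
  sInf {m : ℕ | ∃ S, IsWitness f i S ∧ S.card = m}

open Classical in
noncomputable def resp {n : ℕ} (f : (Fin n → Bool) → Bool) (i : Fin n) : ℝ :=
  if IsCause f i then 1 / ((minWitness f i : ℝ) + 1) else 0

def ind {n : ℕ} (E : Finset (Fin n)) : Fin n → Bool := fun i => if i ∈ E then true else false

def IsExplanation {n : ℕ} (f : (Fin n → Bool) → Bool) (E : Finset (Fin n)) : Prop :=
  f (ind E) = true ∧ ∀ E' ⊂ E, f (ind E') ≠ true

def MonotoneClassifier {n : ℕ} (f : (Fin n → Bool) → Bool) : Prop :=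
  ∀ x y : Fin n → Bool, (∀ i, x i ≤ y i) → f x ≤ f y

namespace MonotoneClassifier

variable {n : ℕ} {f : (Fin n → Bool) → Bool}

theorem eq_true_of_le (hmono : MonotoneClassifier f) {x y : Fin n → Bool}
    (hxy : ∀ i, x i ≤ y i) (hx : f x = true) : f y = true :=
  top_le_iff.mp (hx ▸ hmono x y hxy :)

end MonotoneClassifier

section

variable {n : ℕ}

theorem ind_le_mask_of_disjoint {E S : Finset (Fin n)} (h : Disjoint S E) (i : Fin n) :
    ind E i ≤ mask S i := by
  by_cases hi : i ∈ E
  · simp [ind, mask, hi, Finset.disjoint_right.mp h hi]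
  · simp [ind, hi]

theorem mask_univ_sdiff (E : Finset (Fin n)) : mask (Finset.univ \ E) = ind E := by
  funext i
  by_cases hi : i ∈ E <;> simp [mask, ind, hi]

theorem IsWitness.one_div_card_add_one_le_resp {f : (Fin n → Bool) → Bool} {i : Fin n}
    {S : Finset (Fin n)} (hS : IsWitness f i S) : (1 : ℝ) / (S.card + 1) ≤ resp f i := by
  have hcause : IsCause f i := ⟨S, hS⟩
  have hmin : minWitness f i ≤ S.card := Nat.sInf_le ⟨S, hS, rfl⟩
  rw [resp, if_pos hcause]
  gcongr

theorem IsExplanation.isWitness_univ_sdiff {f : (Fin n → Bool) → Bool}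
    (hmono : MonotoneClassifier f) (h1 : f allTrue = true) {E : Finset (Fin n)}
    (hE : IsExplanation f E) {p : Fin n} (hp : p ∈ E) :
    IsWitness f p (Finset.univ \ E) := by
  refine ⟨by simp [hp], fun S' hS' => ?_, ?_⟩
  · have hdisj : Disjoint S' E := Finset.disjoint_of_subset_left hS' Finset.sdiff_disjoint
    rw [h1]
    exact hmono.eq_true_of_le (ind_le_mask_of_disjoint hdisj) hE.1
  · rw [← Finset.sdiff_erase (Finset.mem_univ p), mask_univ_sdiff, h1]
    exact hE.2 _ (Finset.erase_ssubset hp)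

end

theorem explanation_pixels_are_causes_general {n : ℕ} (f : (Fin n → Bool) → Bool)
    (hmono : MonotoneClassifier f) (h1 : f allTrue = true)
    (E : Finset (Fin n)) (hE : IsExplanation f E) (p : Fin n) (hp : p ∈ E) :
    IsWitness f p (Finset.univ \ E) ∧ IsCause f p ∧
      (1 : ℝ) / (n - E.card + 1) ≤ resp f p := by
  have hwit := hE.isWitness_univ_sdiff hmono h1 hp
  have hcard : ((Finset.univ \ E).card : ℝ) = n - E.card := by
    rw [Finset.card_univ_sdiff, Fintype.card_fin,
      Nat.cast_sub (by simpa using Finset.card_le_univ E)]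
  refine ⟨hwit, ⟨_, hwit⟩, ?_⟩
  simpa [hcard] using hwit.one_div_card_add_one_le_resp

theorem explanation_pixels_are_causes {n : ℕ} (f : (Fin n → Bool) → Bool)
    (hmono : MonotoneClassifier f) (h1 : f allTrue = true) (h0 : f (fun _ => false) = false)
    (E : Finset (Fin n)) (hE : IsExplanation f E) (p : Fin n) (hp : p ∈ E) :
    IsWitness f p (Finset.univ \ E) ∧ IsCause f p ∧
      (1 : ℝ) / (n - E.card + 1) ≤ resp f p :=
  explanation_pixels_are_causes_general f hmono h1 E hE p hp
end

section
/- Let f : (Fin n → Bool) → Bool be monotone with f(all-true) = true and f(all-false) = false. Then the set C of all causes of the classification of the all-true image contains an explanation; in particular f(indicator C) = true. -/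
theorem causes_contain_explanation {n : ℕ} (f : (Fin n → Bool) → Bool)
    (hmono : MonotoneClassifier f) (h1 : f allTrue = true) (h0 : f (fun _ => false) = false)
    (C : Finset (Fin n)) (hC : ∀ i, i ∈ C ↔ IsCause f i) :
    (∃ E ⊆ C, IsExplanation f E) ∧ f (ind C) = true := by
  classical
  have hu : f (ind (Finset.univ : Finset (Fin n))) = true := by
    have : ind (Finset.univ : Finset (Fin n)) = allTrue := by
      funext i; simp [ind, allTrue]
    rw [this, h1]
  have hex : ∃ k, ∃ E : Finset (Fin n), f (ind E) = true ∧ E.card = k :=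
    ⟨_, Finset.univ, hu, rfl⟩
  obtain ⟨E, hE, hcard⟩ := Nat.find_spec hex
  have hmin : ∀ E' ⊂ E, f (ind E') ≠ true := by
    intro E' hlt h'
    have hc : E'.card < Nat.find hex := hcard ▸ Finset.card_lt_card hlt
    exact Nat.find_min hex hc ⟨E', h', rfl⟩
  have hEC : E ⊆ C := by
    intro i hi
    rw [hC]
    refine ⟨Eᶜ, by simpa using hi, ?_, ?_⟩
    · intro S' hS'
      rw [h1]
      have hle : ∀ j, ind E j ≤ mask S' j := by
        intro j
        by_cases hj : j ∈ E
        · have : j ∉ S' := fun h => by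
            have := hS' h; simp at this; exact this hj
          simp [ind, mask, hj, this]
        · simp [ind, hj]
      have := hmono _ _ hle
      rw [hE] at this
      exact le_antisymm (Bool.le_true _) this
    · rw [h1]
      have hmask : mask (insert i Eᶜ) = ind (E.erase i) := by
        funext j
        by_cases hj : j = i
        · simp [mask, ind, hj]
        · by_cases hjE : j ∈ E <;> simp [mask, ind, hj, hjE]
      rw [hmask]
      exact hmin _ (Finset.erase_ssubset hi)
  refine ⟨⟨E, hEC, hE, hmin⟩, ?_⟩
  have hle : ∀ j, ind E j ≤ ind C j := by
    intro j
    by_cases hj : j ∈ E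
    · simp [ind, hj, hEC hj]
    · simp [ind, hj]
  have := hmono _ _ hle
  rw [hE] at this
  exact le_antisymm (Bool.le_true _) this
end

section
/- Let f : (Fin n → Bool) → Bool be monotone with f(all-true) = true and f(all-false) = false. Then a pixel i is a cause of the classification of the all-true image if and only if i belongs to some inclusion-minimal sufficient set (some explanation). -/
theorem cause_iff_mem_explanation {n : ℕ} (f : (Fin n → Bool) → Bool)
    (hmono : MonotoneClassifier f) (h1 : f allTrue = true) (h0 : f (fun _ => false) = false)
    (i : Fin n) :
    IsCause f i ↔ ∃ E : Finset (Fin n), IsExplanation f E ∧ i ∈ E := by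
  have hmask : ∀ S : Finset (Fin n), mask S = ind Sᶜ := by
    intro S; funext j; simp [mask, ind]
  have hle : ∀ (A B : Finset (Fin n)), A ⊆ B → f (ind A) = true → f (ind B) = true := by
    intro A B hAB hA
    have := hmono (ind A) (ind B) (fun j => by
      by_cases h : j ∈ A
      · simp [ind, h, hAB h]
      · simp [ind, h])
    rw [hA] at this
    exact le_antisymm (by simp) this
  constructor
  · rintro ⟨S, hiS, hsub, hins⟩
    set A := Sᶜ with hA
    have hiA : i ∈ A := Finset.mem_compl.mpr hiS
    have hAtrue : f (ind A) = true := by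
      have := hsub S (le_refl S); rw [hmask, h1] at this; exact this
    have hdrop : f (ind (A \ {i})) = false := by
      have : mask (insert i S) = ind (A \ {i}) := by
        funext j
        simp only [mask, ind, hA, Finset.mem_sdiff, Finset.mem_compl,
          Finset.mem_insert, Finset.mem_singleton]
        by_cases h1 : j = i <;> by_cases h2 : j ∈ S <;> simp [h1, h2]
      rw [this, h1] at hins
      exact Bool.eq_false_iff.mpr hins
    -- take a card-minimal subset of A with f (ind ·) = true
    set T := A.powerset.filter (fun E => f (ind E) = true) with hT
    have hAT : A ∈ T := by simp [hT, hAtrue]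
    obtain ⟨E, hET, hmin⟩ := T.exists_min_image Finset.card ⟨A, hAT⟩
    have hEA : E ⊆ A := (Finset.mem_powerset.mp (Finset.mem_filter.mp hET).1)
    have hEtrue : f (ind E) = true := (Finset.mem_filter.mp hET).2
    have hiE : i ∈ E := by
      by_contra hiE
      have hE' : E ⊆ A \ {i} := fun j hj => Finset.mem_sdiff.mpr
        ⟨hEA hj, by simp; rintro rfl; exact hiE hj⟩
      have := hle E (A \ {i}) hE' hEtrue
      rw [hdrop] at this; exact Bool.false_ne_true this
    refine ⟨E, ⟨hEtrue, ?_⟩, hiE⟩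
    intro E' hE' htrue
    have hE'T : E' ∈ T := Finset.mem_filter.mpr
      ⟨Finset.mem_powerset.mpr (hE'.subset.trans hEA), htrue⟩
    exact absurd (hmin E' hE'T) (not_le.mpr (Finset.card_lt_card hE'))
  · rintro ⟨E, ⟨hEtrue, hEmin⟩, hiE⟩
    refine ⟨Eᶜ \ {i}, by simp, ?_, ?_⟩
    · intro S' hS'
      rw [hmask, h1]
      refine hle E S'ᶜ ?_ hEtrue
      intro j hj
      rw [Finset.mem_compl]
      intro hjS'
      have := hS' hjS'
      simp [Finset.mem_sdiff, Finset.mem_compl] at this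
      exact this.1 hj
    · rw [hmask, h1]
      have hcompl : (insert i (Eᶜ \ {i}))ᶜ = E \ {i} := by
        ext j
        simp [Finset.mem_compl, Finset.mem_insert, Finset.mem_sdiff]
        tauto
      rw [hcompl]
      exact hEmin (E \ {i}) (Finset.sdiff_ssubset (by simpa) (by simp))
end

section
/- Monotone superpixel cause existence: under the assumptions of the previous statement and additionally f monotone, there exists a block P_j that is a superpixel-level cause: a set J of blocks with j ∉ J such that masking any subset of the blocks in J preserves f = true and masking J together with block j makes f false. -/
theorem monotone_superpixel_cause_exists {n s : ℕ} (P : Fin s → Finset (Fin n))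
    (hne : ∀ j, (P j).Nonempty)
    (hdisj : ∀ j k, j ≠ k → Disjoint (P j) (P k))
    (hcover : Finset.univ.biUnion P = (Finset.univ : Finset (Fin n)))
    (f : (Fin n → Bool) → Bool) (hmono : MonotoneClassifier f)
    (h1 : f allTrue = true) (h0 : f (fun _ => false) = false) :
    ∃ (j : Fin s) (J : Finset (Fin s)), j ∉ J ∧
      (∀ J' ⊆ J, f (mask (J'.biUnion P)) = f allTrue) ∧
      f (mask ((insert j J).biUnion P)) ≠ f allTrue := by
  classical
  set A : Set ℕ := {m : ℕ | ∃ J : Finset (Fin s), f (mask (J.biUnion P)) ≠ true ∧ J.card = m} with hA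
  have hmaskuniv : mask ((Finset.univ : Finset (Fin s)).biUnion P) = (fun _ => false : Fin n → Bool) := by
    funext i
    simp [mask, hcover]
  have hAne : A.Nonempty := ⟨(Finset.univ : Finset (Fin s)).card, Finset.univ, by rw [hmaskuniv, h0]; simp, rfl⟩
  obtain ⟨J₀, hJ₀, hcard⟩ : ∃ J : Finset (Fin s), f (mask (J.biUnion P)) ≠ true ∧ J.card = sInf A :=
    Nat.sInf_mem hAne
  have hJ₀ne : J₀.Nonempty := by
    rcases Finset.eq_empty_or_nonempty J₀ with h | h
    · exfalso; apply hJ₀; rw [h]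
      have : mask ((∅ : Finset (Fin s)).biUnion P) = (allTrue : Fin n → Bool) := by
        funext i; simp [mask, allTrue]
      rw [this, h1]
    · exact h
  obtain ⟨j, hj⟩ := hJ₀ne
  refine ⟨j, J₀.erase j, Finset.notMem_erase j J₀, ?_, ?_⟩
  · intro J' hJ'
    have hlt : J'.card < sInf A := by
      calc J'.card ≤ (J₀.erase j).card := Finset.card_le_card hJ'
        _ < J₀.card := Finset.card_erase_lt_of_mem hj
        _ = sInf A := hcard
    have : J'.card ∉ A := Nat.notMem_of_lt_sInf hlt
    rw [h1]
    by_contra hne'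
    exact this ⟨J', hne', rfl⟩
  · rw [Finset.insert_erase hj, h1]
    exact hJ₀
end
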